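/- arXiv:1402.4311 — 2 statements merged into one kernel-verified Lean document; each statement's English description precedes it below -/
import Mathlib

section
/- Fix d ≥ 1, j ∈ ℤ and m ∈ ℕ, and set M = 2m+d. Define a_{j,m} = 1/(1 + √(1 + 2^{2j+1} M^{-2})) and b_{j,m} = 8/(1 + √(1 + 2^{2j+4} M^{-2})). Then {x > 0 : 1/2 ≤ x + (2^{2j}/M²) x² ≤ 4} = [a_{j,m}, b_{j,m}], and both a_{j,m} and b_{j,m} are comparable (with constants independent of j and m) to min(1, 2^{-j} M). -/
set_option maxHeartbeats 1000000

/-- Description of the support `{x > 0 : 1/2 ≤ x + 2^{2j}M^{-2}x² ≤ 4} = [a_{j,m}, b_{j,m}]`,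
where `a_{j,m}, b_{j,m}` are comparable to `min(1, 2^{-j}M)` with constants independent
of `j` and `m`. -/
theorem support_interval_comparable (d : ℕ) (hd : 1 ≤ d) :
    ∃ c C : ℝ, 0 < c ∧ 0 < C ∧ ∀ (j : ℤ) (m : ℕ),
      (fun (M a b : ℝ) =>
        ({x : ℝ | 0 < x ∧ 1/2 ≤ x + (2:ℝ) ^ (2*j) / M ^ 2 * x ^ 2 ∧
            x + (2:ℝ) ^ (2*j) / M ^ 2 * x ^ 2 ≤ 4} = Set.Icc a b) ∧
        c * min 1 ((2:ℝ) ^ (-j) * M) ≤ a ∧ a ≤ b ∧ b ≤ C * min 1 ((2:ℝ) ^ (-j) * M))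
      ((2 * m + d : ℝ))
      (1 / (1 + Real.sqrt (1 + (2:ℝ) ^ (2*j+1) / (2 * m + d : ℝ) ^ 2)))
      (8 / (1 + Real.sqrt (1 + (2:ℝ) ^ (2*j+4) / (2 * m + d : ℝ) ^ 2))) := by
  refine ⟨1/3, 4, by norm_num, by norm_num, fun j m => ?_⟩
  simp only
  set M : ℝ := 2 * m + d with hMdef
  have hdR : (1:ℝ) ≤ d := by exact_mod_cast hd
  have hM : 1 ≤ M := by
    have hm : (0:ℝ) ≤ m := Nat.cast_nonneg m
    rw [hMdef]; linarith
  have hM0 : 0 < M := lt_of_lt_of_le one_pos hM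
  set s : ℝ := (2:ℝ)^j / M with hsdef
  have hs0 : 0 < s := div_pos (zpow_pos two_pos j) hM0
  set t : ℝ := (2:ℝ)^(2*j) / M^2 with htdef
  have hts : t = s^2 := by
    rw [htdef, hsdef, div_pow]
    congr 1
    rw [sq, ← zpow_add₀ (two_ne_zero : (2:ℝ) ≠ 0), two_mul]
  have ht0 : 0 < t := by rw [hts]; positivity
  have h2t : (2:ℝ)^(2*j+1) / M^2 = 2*t := by
    rw [htdef, zpow_add₀ (two_ne_zero), zpow_one]; ring
  have h16t : (2:ℝ)^(2*j+4) / M^2 = 16*t := by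
    rw [htdef, zpow_add₀ (two_ne_zero)]; norm_num; ring
  rw [h2t, h16t]
  set u : ℝ := Real.sqrt (1 + 2*t) with hudef
  set v : ℝ := Real.sqrt (1 + 16*t) with hvdef
  have hu0 : 0 ≤ u := Real.sqrt_nonneg _
  have hv0 : 0 ≤ v := Real.sqrt_nonneg _
  have hu2 : u^2 = 1 + 2*t := Real.sq_sqrt (by linarith)
  have hv2 : v^2 = 1 + 16*t := Real.sq_sqrt (by linarith)
  have hu1 : 1 ≤ u := by nlinarith
  have hv1 : 1 ≤ v := by nlinarith
  have hA : (0:ℝ) < 1 + u := by linarith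
  have hB : (0:ℝ) < 1 + v := by linarith
  set a : ℝ := 1 / (1 + u) with hadef
  set b : ℝ := 8 / (1 + v) with hbdef
  clear_value t s u v
  have ha0 : 0 < a := by positivity
  have hb0 : 0 < b := by positivity
  clear_value a b
  have hfa : a + t * a^2 = 1/2 := by
    have htu : t = (u^2 - 1)/2 := by linarith
    rw [hadef, htu]; field_simp; ring
  have hfb : b + t * b^2 = 4 := by
    have htv : t = (v^2 - 1)/16 := by linarith
    rw [hbdef, htv]; field_simp; ring
  have hab : a ≤ b := by
    have hv3u : v ≤ 3*u := by
      have h1 : Real.sqrt (1 + 16*t) ≤ Real.sqrt ((3*u)^2) :=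
        Real.sqrt_le_sqrt (by nlinarith)
      rw [Real.sqrt_sq (by linarith), ← hvdef] at h1; exact h1
    rw [hadef, hbdef, div_le_div_iff₀ hA hB]
    linarith
  refine ⟨?_, ?_, hab, ?_⟩
  · ext x
    simp only [Set.mem_setOf_eq, Set.mem_Icc]
    constructor
    · rintro ⟨hx, h1, h2⟩
      constructor
      · nlinarith [mul_pos ht0 (add_pos hx ha0)]
      · nlinarith [mul_pos ht0 (add_pos hx hb0)]
    · rintro ⟨hax, hxb⟩
      have hx : 0 < x := lt_of_lt_of_le ha0 hax
      refine ⟨hx, ?_, ?_⟩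
      · nlinarith [mul_nonneg (sub_nonneg.2 hax) (mul_nonneg ht0.le (add_pos hx ha0).le)]
      · nlinarith [mul_nonneg (sub_nonneg.2 hxb) (mul_nonneg ht0.le (add_pos hx hb0).le)]
  · -- lower bound for a
    have hinv : (2:ℝ)^(-j) * M = 1/s := by
      rw [hsdef, zpow_neg]; field_simp
    rw [hinv]
    rcases le_total s 1 with hs1 | hs1
    · have hmin : min (1:ℝ) (1/s) = 1 := min_eq_left (one_le_one_div hs0 hs1)
      rw [hmin]
      have hu2' : u ≤ 2 := by
        have h1 : Real.sqrt (1 + 2*t) ≤ Real.sqrt ((2:ℝ)^2) :=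
          Real.sqrt_le_sqrt (by nlinarith)
        rw [Real.sqrt_sq (by norm_num), ← hudef] at h1; exact h1
      rw [hadef, show (1:ℝ)/3 * 1 = 1/3 by ring, div_le_div_iff₀ (by norm_num) hA]
      linarith
    · have hmin : min (1:ℝ) (1/s) = 1/s := min_eq_right ((div_le_one hs0).2 hs1)
      rw [hmin]
      have hu2s : u ≤ 2*s := by
        have h1 : Real.sqrt (1 + 2*t) ≤ Real.sqrt ((2*s)^2) :=
          Real.sqrt_le_sqrt (by nlinarith)
        rw [Real.sqrt_sq (by linarith), ← hudef] at h1; exact h1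
      rw [hadef, show (1:ℝ)/3 * (1/s) = 1/(3*s) by ring,
        div_le_div_iff₀ (by positivity) hA]
      linarith
  · -- upper bound for b
    have hinv : (2:ℝ)^(-j) * M = 1/s := by
      rw [hsdef, zpow_neg]; field_simp
    rw [hinv]
    rcases le_total s 1 with hs1 | hs1
    · have hmin : min (1:ℝ) (1/s) = 1 := min_eq_left (one_le_one_div hs0 hs1)
      rw [hmin, hbdef, show (4:ℝ) * 1 = 4/1 by ring, div_le_div_iff₀ hB (by norm_num)]
      linarith
    · have hmin : min (1:ℝ) (1/s) = 1/s := min_eq_right ((div_le_one hs0).2 hs1)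
      rw [hmin]
      have h4s : 4*s ≤ v := by
        have h1 : Real.sqrt ((4*s)^2) ≤ Real.sqrt (1 + 16*t) :=
          Real.sqrt_le_sqrt (by nlinarith)
        rw [Real.sqrt_sq (by linarith), ← hvdef] at h1; exact h1
      rw [hbdef, show (4:ℝ) * (1/s) = 4/s by ring, div_le_div_iff₀ hB hs0]
      linarith
end

section
/- Let Q ∈ ℕ, let G, h be smooth functions on an interval [a,b] with G' nonvanishing on [a,b], and define the operator D h = d/dx (h / G'). Then D^Q h = Σ_{k=Q}^{2Q} Σ_{α₁+2α₂=k, 0≤α₁≤Q} C(α₁,α₂,k,Q) · h^{(α₁)} (G'')^{α₂} / (G')^k for suitable combinatorial constants C(α₁,α₂,k,Q), where the inner sum is over pairs (α₁,α₂) ∈ {0,…,Q} × ℕ with α₁ + 2α₂ = k. -/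
open Finset

noncomputable def myc : ℕ → ℕ → ℝ
  | 0, 0 => 1
  | 0, _+1 => 0
  | Q+1, 0 => myc Q 0
  | Q+1, j+1 => myc Q (j+1) - (Q+1+j) * myc Q j

lemma myc_eq_zero : ∀ Q j, Q < j → myc Q j = 0
  | 0, 0, hj => by omega
  | 0, j+1, hj => by simp [myc]
  | Q+1, 0, hj => by omega
  | Q+1, j+1, hj => by
      rw [myc, myc_eq_zero Q (j+1) (by omega), myc_eq_zero Q j (by omega)]
      ring

lemma aux_alg (K u' u c m P g : ℂ) (hP : P ≠ 0) (hg : g ≠ 0) :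
    K * u' / (P * g) - m * K * c * u / (P * g * g)
      = (K * u' * (P * g) - K * u * (m * P * c)) / (P * g)^2 := by
  field_simp

lemma comb (Q : ℕ) (u : ℕ → ℂ) (c gx : ℂ) :
    ∑ j ∈ Finset.range (Q+1), ((myc Q j : ℂ) * c^j * u (Q+1-j) / gx^(Q+1+j)
        - (Q+1+j : ℂ) * ((myc Q j : ℂ) * c^j) * c * u (Q-j) / gx^(Q+2+j))
    = ∑ j ∈ Finset.range (Q+2), (myc (Q+1) j : ℂ) * u (Q+1-j) * c^j / gx^(Q+1+j) := by
  rw [Finset.sum_sub_distrib,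
    Finset.sum_range_succ' (fun j => (myc (Q+1) j : ℂ) * u (Q+1-j) * c^j / gx^(Q+1+j)) (Q+1)]
  have hsplit : ∀ j ∈ Finset.range (Q+1),
      (myc (Q+1) (j+1) : ℂ) * u (Q+1-(j+1)) * c^(j+1) / gx^(Q+1+(j+1))
      = (myc Q (j+1) : ℂ) * u (Q+1-(j+1)) * c^(j+1) / gx^(Q+1+(j+1))
        - (Q+1+j : ℂ) * ((myc Q j : ℂ) * c^j) * c * u (Q-j) / gx^(Q+2+j) := by
    intro j _
    have h1 : Q+1-(j+1) = Q - j := by omega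
    have h2 : Q+1+(j+1) = Q+2+j := by omega
    rw [h1, h2, myc]
    push_cast
    ring
  rw [Finset.sum_congr rfl hsplit, Finset.sum_sub_distrib]
  have e : ∑ j ∈ Finset.range (Q+1), (myc Q (j+1) : ℂ) * u (Q+1-(j+1)) * c^(j+1) / gx^(Q+1+(j+1))
      + (myc Q 0 : ℂ) * u (Q+1-0) * c^0 / gx^(Q+1+0)
      = ∑ j ∈ Finset.range (Q+1), (myc Q j : ℂ) * u (Q+1-j) * c^j / gx^(Q+1+j) := by
    rw [← Finset.sum_range_succ' (fun j => (myc Q j : ℂ) * u (Q+1-j) * c^j / gx^(Q+1+j)) (Q+1),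
      Finset.sum_range_succ, myc_eq_zero Q (Q+1) (by omega)]
    simp
  have e2 : ∑ j ∈ Finset.range (Q+1), (myc Q j : ℂ) * c^j * u (Q+1-j) / gx^(Q+1+j)
      = ∑ j ∈ Finset.range (Q+1), (myc Q j : ℂ) * u (Q+1-j) * c^j / gx^(Q+1+j) :=
    Finset.sum_congr rfl fun j _ => by ring
  have e3 : (myc (Q+1) 0 : ℂ) = (myc Q 0 : ℂ) := by rw [myc]
  rw [e2, e3, ← e]
  ring

lemma key (G : ℝ → ℝ) (h : ℝ → ℂ) (hG : ContDiff ℝ (⊤ : ℕ∞) G) (hh : ContDiff ℝ (⊤ : ℕ∞) h)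
    (c2 : ℝ) (hc2 : ∀ x, deriv (deriv G) x = c2) (Q : ℕ) :
    ∀ x, deriv G x ≠ 0 →
      ((fun f : ℝ → ℂ => fun y => deriv (fun z => f z / Complex.ofReal (deriv G z)) y)^[Q] h) x
      = ∑ j ∈ Finset.range (Q+1), (myc Q j : ℂ) * iteratedDeriv (Q - j) h x * (c2:ℂ)^j
          / (Complex.ofReal (deriv G x))^(Q+j) := by
  have hG2 : ContDiff ℝ (⊤:ℕ∞) G := hG.of_le (by simp)
  have hh2 : ContDiff ℝ (⊤:ℕ∞) h := hh.of_le (by simp)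
  have hGd : Differentiable ℝ (deriv G) :=
    ((contDiff_infty_iff_deriv.mp hG2).2).differentiable (by simp)
  have hitd : ∀ n : ℕ, ∀ x : ℝ, HasDerivAt (iteratedDeriv n h) (iteratedDeriv (n+1) h x) x := by
    intro n x
    have hcd : ContDiff ℝ (⊤:ℕ∞) (iteratedDeriv n h) := by
      rw [iteratedDeriv_eq_iterate]; exact hh2.iterate_deriv n
    have := (hcd.differentiable (by simp) x).hasDerivAt
    rwa [← iteratedDeriv_succ] at this
  induction Q with
  | zero =>
      intro x hx
      simp [myc, iteratedDeriv_zero]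
  | succ Q IH =>
      intro x hx
      rw [Function.iterate_succ_apply']
      have hU : IsOpen {z : ℝ | deriv G z ≠ 0} := isOpen_ne.preimage hGd.continuous
      set g : ℝ → ℂ := fun z => Complex.ofReal (deriv G z) with hg
      have hgx : g x ≠ 0 := by simpa [hg] using hx
      have hev : (fun z => ((fun f : ℝ → ℂ => fun y => deriv (fun z => f z / Complex.ofReal (deriv G z)) y)^[Q] h) z / Complex.ofReal (deriv G z))
          =ᶠ[nhds x] fun z => ∑ j ∈ Finset.range (Q+1),
            ((myc Q j : ℂ) * (c2:ℂ)^j) * iteratedDeriv (Q - j) h z / (g z)^(Q+1+j) := by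
        filter_upwards [hU.mem_nhds hx] with z hz
        rw [IH z hz, Finset.sum_div]
        refine Finset.sum_congr rfl fun j _ => ?_
        rw [div_div, ← pow_succ]
        ring_nf
        rfl
      rw [hev.deriv_eq]
      have hder : HasDerivAt (fun z => ∑ j ∈ Finset.range (Q+1),
            ((myc Q j : ℂ) * (c2:ℂ)^j) * iteratedDeriv (Q - j) h z / (g z)^(Q+1+j))
          (∑ j ∈ Finset.range (Q+1),
            ((myc Q j : ℂ) * (c2:ℂ)^j * iteratedDeriv (Q + 1 - j) h x / (g x)^(Q+1+j)
              - (Q+1+j : ℂ) * ((myc Q j : ℂ) * (c2:ℂ)^j) * (c2:ℂ) * iteratedDeriv (Q - j) h x / (g x)^(Q+2+j))) x := by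
        refine HasDerivAt.fun_sum fun j hj => ?_
        have hr : HasDerivAt (fun z => (deriv G z)^(Q+1+j))
            ((Q+1+j : ℝ) * (deriv G x)^(Q+j) * c2) x := by
          have := ((hGd x).hasDerivAt).pow (Q+1+j)
          have h1 : (Q+1+j : ℕ) - 1 = Q + j := by omega
          rw [hc2 x, h1] at this
          refine this.congr_deriv ?_
          push_cast
          ring
        have hgm : HasDerivAt (fun z => (g z)^(Q+1+j))
            ((Q+1+j : ℂ) * (g x)^(Q+j) * (c2:ℂ)) x := by
          have := hr.ofReal_comp
          simp only [hg]
          convert this using 2 <;> push_cast <;> ring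
        have hf := (hitd (Q - j) x).const_mul ((myc Q j : ℂ) * (c2:ℂ)^j)
        have hd := hf.div hgm (pow_ne_zero _ hgx)
        refine hd.congr_deriv ?_
        symm
        have hj' : j ≤ Q := by simpa [Nat.lt_succ_iff] using hj
        have hQj : Q - j + 1 = Q + 1 - j := by omega
        rw [← hQj]
        have hpow : (g x)^(Q+1+j) = (g x)^(Q+j) * g x := by
          rw [show Q+1+j = Q+j+1 from by omega, pow_succ]
        have hpow2 : (g x)^(Q+2+j) = (g x)^(Q+j) * g x * g x := by
          rw [show Q+2+j = Q+j+1+1 from by omega, pow_succ, pow_succ]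
        rw [hpow, hpow2]
        exact aux_alg _ _ _ _ _ _ _ (pow_ne_zero _ hgx) hgx
      rw [hder.deriv]
      have := comb Q (fun n => iteratedDeriv n h x) (c2:ℂ) (g x)
      simp only [hg] at this ⊢
      convert this using 2

/-- Structure of the iterates of the operator `D h = d/dx (h / G')` for a quadratic phase `G`
(so `G''` is constant and higher derivatives of `G` vanish):
`D^Q h = ∑_{k=Q}^{2Q} ∑_{α₁+2α₂=k, 0≤α₁≤Q} C(α₁,α₂,k,Q) h^{(α₁)} (G'')^{α₂} / (G')^k`. -/
theorem iterated_D_structure (a b : ℝ) (hab : a < b) (G : ℝ → ℝ) (h : ℝ → ℂ)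
    (hG : ContDiff ℝ (⊤ : ℕ∞) G) (hh : ContDiff ℝ (⊤ : ℕ∞) h)
    (hquad : ∀ x : ℝ, deriv (deriv (deriv G)) x = 0)
    (hG' : ∀ x ∈ Set.Icc a b, deriv G x ≠ 0) (Q : ℕ) :
    ∃ C : ℕ → ℕ → ℝ, ∀ x ∈ Set.Icc a b,
      ((fun f : ℝ → ℂ => fun y => deriv (fun z => f z / Complex.ofReal (deriv G z)) y)^[Q] h) x =
        ∑ k ∈ Finset.Icc Q (2 * Q),
          ∑ α ∈ (Finset.range (Q + 1) ×ˢ Finset.range (Q + 1)).filter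
              (fun α => α.1 + 2 * α.2 = k),
            Complex.ofReal (C α.1 α.2) * iteratedDeriv α.1 h x
              * (Complex.ofReal (deriv (deriv G) x)) ^ α.2
              / (Complex.ofReal (deriv G x)) ^ k := by
  have hG2 : ContDiff ℝ (⊤:ℕ∞) G := hG.of_le (by simp)
  have hGd2 : Differentiable ℝ (deriv (deriv G)) := by
    have h2 : ContDiff ℝ (⊤:ℕ∞) (deriv^[2] G) := hG2.iterate_deriv 2
    have he : deriv^[2] G = deriv (deriv G) := by
      rw [Function.iterate_succ_apply', Function.iterate_one]
    rw [he] at h2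
    exact h2.differentiable (by simp)
  set c2 := deriv (deriv G) 0 with hc2def
  have hc2 : ∀ x, deriv (deriv G) x = c2 := fun x =>
    is_const_of_deriv_eq_zero hGd2 hquad x 0
  refine ⟨fun α₁ α₂ => if α₁ + α₂ = Q then myc Q α₂ else 0, fun x hx => ?_⟩
  rw [key G h hG hh c2 hc2 Q x (hG' x hx)]
  rw [show Finset.Icc Q (2*Q) = Finset.Ico Q (2*Q+1) by rw [Finset.Ico_add_one_right_eq_Icc]]
  rw [Finset.sum_Ico_eq_sum_range, show 2*Q+1-Q = Q+1 from by omega]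
  refine Finset.sum_congr rfl fun j hj => ?_
  have hjQ : j ≤ Q := by simpa [Nat.lt_succ_iff] using hj
  rw [Finset.sum_eq_single_of_mem ((Q - j, j) : ℕ × ℕ)
    (by
      simp only [Finset.mem_filter, Finset.mem_product, Finset.mem_range]
      omega)
    (by
      rintro ⟨b1, b2⟩ hb hne
      simp only [Finset.mem_filter, Finset.mem_product, Finset.mem_range] at hb
      have : ¬ (b1 + b2 = Q) := by
        intro hbq
        apply hne
        have : b2 = j := by omega
        have : b1 = Q - j := by omega
        simp_all
      simp only [this, if_false]
      simp)]
  have hQ : (Q - j) + j = Q := by omega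
  simp only [hQ, if_pos rfl, hc2 x]
  simp
end
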